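/- arXiv:2602.15114 — 3 statements merged into one kernel-verified Lean document; each statement's English description precedes it below -/
import Mathlib

section
/- Let m ≥ 2 and m12 ≥ 1 be integers, and let k1, k2 be integers with 0 ≤ k2 ≤ k1 and m12 ≤ k1 ≤ m·m12 − 1. Set n1 = m·m12 − k1 and n2 = m·m12 − k2. Then TNS(m,m12,m; 2,n1,n2) equals the whole space of tensors Fin 2 → Fin n1 → Fin n2 → ℂ. (This is the final clause of the main theorem: when the nontriviality condition k1 < m12 fails, the tensor network variety fills the ambient space.) -/
open scoped BigOperators

noncomputable section

/-- Parametrized triangle tensor network tensors. -/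
def tnsSet (m01 m12 m02 n0 n1 n2 : ℕ) :
    Set (Fin n0 → Fin n1 → Fin n2 → ℂ) :=
  {T | ∃ (X0 : Fin n0 → Fin m01 × Fin m02 → ℂ)
        (X1 : Fin n1 → Fin m01 × Fin m12 → ℂ)
        (X2 : Fin n2 → Fin m12 × Fin m02 → ℂ),
      ∀ a b c, T a b c =
        ∑ i : Fin m01, ∑ j : Fin m12, ∑ k : Fin m02,
          X0 a (i, k) * X1 b (i, j) * X2 c (j, k)}

/-- The triangle tensor network variety: Euclidean closure of the parametrized set. -/
def TNS (m01 m12 m02 n0 n1 n2 : ℕ) : Set (Fin n0 → Fin n1 → Fin n2 → ℂ) :=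
  closure (tnsSet m01 m12 m02 n0 n1 n2)

/-- The vanishing ideal of a subset of an affine space over ℂ. -/
def vanishingIdeal' {ι : Type*} (Z : Set (ι → ℂ)) : Ideal (MvPolynomial ι ℂ) where
  carrier := {p | ∀ z ∈ Z, MvPolynomial.eval z p = 0}
  zero_mem' := by intro z _; simp
  add_mem' := by
    intro a b ha hb z hz
    simp [map_add, ha z hz, hb z hz]
  smul_mem' := by
    intro c a ha z hz
    simp [smul_eq_mul, ha z hz]

/-- Affine dimension of a set of coordinate tensors. -/
def affineDim {n0 n1 n2 : ℕ} (Z : Set (Fin n0 → Fin n1 → Fin n2 → ℂ)) : WithBot ℕ∞ :=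
  ringKrullDim (MvPolynomial (Fin n0 × Fin n1 × Fin n2) ℂ ⧸
    vanishingIdeal' ((fun T (p : Fin n0 × Fin n1 × Fin n2) => T p.1 p.2.1 p.2.2) '' Z))

/-!
With `X0 a` diagonal, `T a = A * (diagonal (w a) ⊗ 1) * B`, so a pencil `(T 0, T 1)` lies in the
parametrized set as soon as some invertible `E` satisfies `T 1 * E = T 0 * E * (diagonal w ⊗ 1)`,
i.e. the columns of `E` in block `i` lie in the kernel of `w i • T 0 - T 1`. As
`n1 ≤ (m - 1) * m12`, the pencil fits into an `(m * m12)`-square one whose rows of block `0` are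
free; they are used to normalise kernel vectors, which yields such an `E` whose entries are
polynomial in the pencil. At the pencil `(J ⊗ 1, 1)`, `J` the shift matrix, this `E` is a
Vandermonde matrix tensored with the identity. Hence along the line from that pencil to any
other one, `det E` is a nonzero polynomial, and the endpoint is a limit of points of the
parametrized set.
-/

open Matrix Polynomial
open scoped Kronecker

namespace TriangleNetwork

section Parametrization

variable {m m12 n0 n1 n2 : ℕ}

theorem mul_diagonal_mul_mem_tnsSet (l : Fin n0 → Fin m → ℂ)
    (A : Matrix (Fin n1) (Fin m × Fin m12) ℂ) (B : Matrix (Fin m × Fin m12) (Fin n2) ℂ) :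
    (fun a b c => (A * diagonal (fun x : Fin m × Fin m12 => l a x.1) * B) b c) ∈
      tnsSet m m12 m n0 n1 n2 := by
  refine ⟨fun a ik => if ik.1 = ik.2 then l a ik.1 else 0, A, fun c jk => B (jk.2, jk.1) c,
    fun a b c => ?_⟩
  dsimp only
  rw [mul_apply]
  simp only [mul_diagonal, Fintype.sum_prod_type, ite_mul, zero_mul,
    Finset.sum_ite_eq, Finset.mem_univ, if_true]
  exact Finset.sum_congr rfl fun i _ => Finset.sum_congr rfl fun j _ => by ring

theorem mem_tnsSet_of_mul_eq_mul_diagonal (S : Fin 2 → Matrix (Fin n1) (Fin m × Fin m12) ℂ)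
    {E : Matrix (Fin m × Fin m12) (Fin m × Fin m12) ℂ} (hE : IsUnit E.det) (w : Fin m → ℂ)
    (h : S 1 * E = S 0 * E * diagonal (fun x : Fin m × Fin m12 => w x.1))
    (g : Fin n2 → Fin m × Fin m12) :
    (fun a b c => S a b (g c)) ∈ tnsSet m m12 m 2 n1 n2 := by
  convert mul_diagonal_mul_mem_tnsSet ![fun _ => 1, w] (S 0 * E) (E⁻¹.submatrix id g) using 4
    with a b c
  have hS :
      S a = S 0 * E * diagonal (fun x : Fin m × Fin m12 => ![fun _ => 1, w] a x.1) * E⁻¹ := by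
    obtain rfl | rfl : a = 0 ∨ a = 1 := by omega
    · simp [diagonal_one, mul_nonsing_inv_cancel_right _ _ hE]
    · rw [← mul_nonsing_inv_cancel_right _ (S 1) hE, h]
      rfl
  rw [hS]
  rfl

end Parametrization

section Adjugate

variable {R n : Type*} [CommRing R] [Fintype n] [DecidableEq n]

theorem adjugate_apply_eq_of_mulVec_eq_single {M : Matrix n n R} {v : n → R} {i : n}
    (h : M *ᵥ v = Pi.single i 1) (j : n) : M.adjugate j i = M.det * v j :=
  calc M.adjugate j i = (M.adjugate *ᵥ (M *ᵥ v)) j := by rw [h, mulVec_single_one]; rfl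
    _ = M.det * v j := by rw [mulVec_mulVec, adjugate_mul, smul_mulVec, one_mulVec]; rfl

end Adjugate

theorem mem_closure_of_eval_ne_zero {Y : Type*} [TopologicalSpace Y] {s : Set Y} {g : ℂ → Y}
    (hg : Continuous g) {p : ℂ[X]} (hp : p ≠ 0) (hs : ∀ t, p.eval t ≠ 0 → g t ∈ s)
    (t : ℂ) : g t ∈ closure s := by
  have hdense : Dense {t | p.eval t ≠ 0} :=
    (finite_setOfPred_isRoot hp).countable.dense_compl ℂ
  exact closure_mono (Set.image_subset_iff.2 hs)
    (image_closure_subset_closure_image hg ⟨t, hdense t, rfl⟩)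

section KernelCertificate

variable {R R' : Type*} [CommRing R] [CommRing R'] {m m12 : ℕ}

/-- Identity rows in block `0` square up `c • S 0 - S 1`; as `M * adjugate M = det M • 1`,
column `(0, j)` of the adjugate is then a kernel vector of the remaining rows. -/
def kernelSystem (S : Fin 2 → Matrix (Fin (m + 1) × Fin m12) (Fin (m + 1) × Fin m12) R)
    (c : R) : Matrix (Fin (m + 1) × Fin m12) (Fin (m + 1) × Fin m12) R :=
  of fun x => if x.1 = 0 then (1 : Matrix _ _ R) x else (c • S 0 - S 1) x

def kernelMatrix (S : Fin 2 → Matrix (Fin (m + 1) × Fin m12) (Fin (m + 1) × Fin m12) R)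
    (w : Fin (m + 1) → R) : Matrix (Fin (m + 1) × Fin m12) (Fin (m + 1) × Fin m12) R :=
  of fun y z => (kernelSystem S (w z.1)).adjugate y (0, z.2)

theorem mul_kernelMatrix_apply_of_ne_zero
    (S : Fin 2 → Matrix (Fin (m + 1) × Fin m12) (Fin (m + 1) × Fin m12) R)
    (w : Fin (m + 1) → R) {x : Fin (m + 1) × Fin m12} (hx : x.1 ≠ 0)
    (z : Fin (m + 1) × Fin m12) :
    (S 1 * kernelMatrix S w) x z = w z.1 * (S 0 * kernelMatrix S w) x z := by
  have h := congr_fun₂ (mul_adjugate (kernelSystem S (w z.1))) x (0, z.2)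
  rw [Matrix.smul_apply, one_apply_ne fun h => hx (congrArg Prod.fst h), smul_zero, mul_apply] at h
  have hrow : ∀ y, kernelSystem S (w z.1) x y = w z.1 * S 0 x y - S 1 x y := fun y => by
    simp [kernelSystem, hx]
  simp only [hrow, sub_mul, Finset.sum_sub_distrib, mul_assoc, ← Finset.mul_sum] at h
  simp only [mul_apply, kernelMatrix, of_apply]
  linear_combination -h

theorem map_kernelSystem (f : R →+* R')
    (S : Fin 2 → Matrix (Fin (m + 1) × Fin m12) (Fin (m + 1) × Fin m12) R) (c : R) :
    (kernelSystem S c).map f = kernelSystem (fun a => (S a).map f) (f c) := by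
  ext x y
  by_cases hx : x.1 = 0 <;> simp [kernelSystem, hx, one_apply, apply_ite f]

theorem map_kernelMatrix (f : R →+* R')
    (S : Fin 2 → Matrix (Fin (m + 1) × Fin m12) (Fin (m + 1) × Fin m12) R)
    (w : Fin (m + 1) → R) :
    (kernelMatrix S w).map f = kernelMatrix (fun a => (S a).map f) (f ∘ w) := by
  ext y z
  rw [kernelMatrix, kernelMatrix, map_apply, of_apply, of_apply, Function.comp_apply,
    ← map_kernelSystem, ← RingHom.mapMatrix_apply, ← RingHom.map_adjugate,
    RingHom.mapMatrix_apply, map_apply]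

end KernelCertificate

section LinePencil

variable {R n : Type*} [CommRing R]

def linePencil (S₀ S : Fin 2 → Matrix n n R) : Fin 2 → Matrix n n R[X] :=
  fun a => (S₀ a).map C + (X : R[X]) • (S a - S₀ a).map C

theorem eval_det_kernelMatrix_linePencil {m m12 : ℕ}
    (S₀ S : Fin 2 → Matrix (Fin (m + 1) × Fin m12) (Fin (m + 1) × Fin m12) R)
    (w : Fin (m + 1) → R) (t : R) :
    (kernelMatrix (linePencil S₀ S) (C ∘ w)).det.eval t =
      (kernelMatrix (fun a => S₀ a + t • (S a - S₀ a)) w).det := by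
  have hline : (fun a => (linePencil S₀ S a).map (evalRingHom t)) =
      fun a => S₀ a + t • (S a - S₀ a) := by
    ext a x y
    simp [linePencil]
  have hw : evalRingHom t ∘ C ∘ w = w := by
    ext i
    simp
  rw [← coe_evalRingHom, RingHom.map_det, RingHom.mapMatrix_apply, map_kernelMatrix, hline, hw]

end LinePencil

section ShiftPencil

variable {K : Type*} [Field K] {m m12 : ℕ}

def shiftMatrix : Matrix (Fin (m + 1)) (Fin (m + 1)) K :=
  of fun s r => if (r : ℕ) + 1 = s then 1 else 0

def shiftPencil : Fin 2 → Matrix (Fin (m + 1) × Fin m12) (Fin (m + 1) × Fin m12) K :=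
  ![shiftMatrix ⊗ₖ 1, 1]

def shiftSystem (c : K) : Matrix (Fin (m + 1)) (Fin (m + 1)) K :=
  of fun s => if s = 0 then (1 : Matrix _ _ K) s else (c • shiftMatrix - 1 : Matrix _ _ K) s

theorem kernelSystem_shiftPencil (c : K) :
    kernelSystem (shiftPencil (m := m) (m12 := m12)) c =
      shiftSystem c ⊗ₖ (1 : Matrix (Fin m12) (Fin m12) K) := by
  ext x y
  by_cases hx : x.1 = 0 <;>
    simp [kernelSystem, shiftSystem, shiftPencil, hx, kroneckerMap_apply, one_apply,
      Prod.ext_iff] <;>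
    split_ifs <;> simp_all

theorem det_shiftSystem_ne_zero (c : K) : (shiftSystem c : Matrix (Fin (m + 1)) _ K).det ≠ 0 := by
  rw [det_of_isLowerTriangular _ fun s r (hrs : s < r) => ?_]
  · refine Finset.prod_ne_zero_iff.2 fun s _ => ?_
    by_cases hs : s = 0 <;> simp [shiftSystem, shiftMatrix, hs]
  · have h1 : s ≠ r := hrs.ne
    have h2 : ¬ (r : ℕ) + 1 = s := by have := Fin.lt_def.1 hrs; omega
    by_cases hs : s = 0 <;> simp_all [shiftSystem, shiftMatrix, one_apply]

theorem shiftSystem_mulVec_pow (c : K) :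
    (shiftSystem c : Matrix (Fin (m + 1)) _ K) *ᵥ (fun r => c ^ (r : ℕ)) = Pi.single 0 1 := by
  ext s
  by_cases hs : s = 0
  · simp [shiftSystem, hs, mulVec, dotProduct, one_apply]
  · obtain ⟨s, rfl⟩ := Fin.exists_succ_eq.2 hs
    have hcast : ∀ r : Fin (m + 1), ((r : ℕ) = s) ↔ r = s.castSucc := by simp [Fin.ext_iff]
    simp [shiftSystem, shiftMatrix, hs, mulVec, dotProduct, hcast, sub_mul, one_apply, ite_mul,
      Finset.sum_sub_distrib]
    ring

theorem kernelMatrix_shiftPencil (w : Fin (m + 1) → K) :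
    kernelMatrix (shiftPencil (m12 := m12)) w =
      ((vandermonde w)ᵀ ⊗ₖ (1 : Matrix (Fin m12) (Fin m12) K)) *
        diagonal fun z =>
          (shiftSystem (m := m) (w z.1) ⊗ₖ (1 : Matrix (Fin m12) (Fin m12) K)).det := by
  ext y z
  rw [mul_diagonal, kernelMatrix, of_apply, kernelSystem_shiftPencil, mul_comm]
  refine adjugate_apply_eq_of_mulVec_eq_single
    (v := fun y => ((vandermonde w)ᵀ ⊗ₖ (1 : Matrix (Fin m12) (Fin m12) K)) y z)
    (funext fun x => ?_) y
  have hcol : (shiftSystem (w z.1) * (vandermonde w)ᵀ : Matrix (Fin (m + 1)) _ K) x.1 z.1 =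
      (Pi.single 0 1 : Fin (m + 1) → K) x.1 :=
    congr_fun (shiftSystem_mulVec_pow (w z.1)) x.1
  change ((shiftSystem (w z.1) ⊗ₖ 1) * ((vandermonde w)ᵀ ⊗ₖ 1) :
    Matrix (Fin (m + 1) × Fin m12) _ K) x z = _
  rw [← mul_kronecker_mul, Matrix.one_mul, kroneckerMap_apply, hcol]
  simp only [Pi.single_apply, one_apply, Prod.ext_iff]
  split_ifs <;> simp_all

theorem det_kernelMatrix_shiftPencil_ne_zero {w : Fin (m + 1) → K} (hw : Function.Injective w) :
    (kernelMatrix (shiftPencil (m12 := m12)) w).det ≠ 0 := by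
  rw [kernelMatrix_shiftPencil, det_mul, det_kronecker, det_diagonal, det_transpose]
  simp only [det_kronecker, det_one, one_pow, mul_one]
  exact mul_ne_zero (pow_ne_zero _ (det_vandermonde_ne_zero_iff.2 hw))
    (Finset.prod_ne_zero_iff.2 fun z _ => pow_ne_zero _ (det_shiftSystem_ne_zero _))

end ShiftPencil

section Restriction

variable {m m12 n1 n2 : ℕ}

theorem restrict_mem_tnsSet_of_det_kernelMatrix_ne_zero
    (S : Fin 2 → Matrix (Fin (m + 1) × Fin m12) (Fin (m + 1) × Fin m12) ℂ)
    {w : Fin (m + 1) → ℂ} (hS : (kernelMatrix S w).det ≠ 0)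
    {f : Fin n1 → Fin (m + 1) × Fin m12} (hf : ∀ b, (f b).1 ≠ 0)
    (g : Fin n2 → Fin (m + 1) × Fin m12) :
    (fun a b c => S a (f b) (g c)) ∈ tnsSet (m + 1) m12 (m + 1) 2 n1 n2 := by
  refine mem_tnsSet_of_mul_eq_mul_diagonal (fun a => (S a).submatrix f id)
    (isUnit_iff_ne_zero.2 hS) w ?_ g
  ext b z
  rw [mul_diagonal, mul_comm]
  exact mul_kernelMatrix_apply_of_ne_zero S w (hf b) z

theorem restrict_mem_TNS
    (S : Fin 2 → Matrix (Fin (m + 1) × Fin m12) (Fin (m + 1) × Fin m12) ℂ)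
    {f : Fin n1 → Fin (m + 1) × Fin m12} (hf : ∀ b, (f b).1 ≠ 0)
    (g : Fin n2 → Fin (m + 1) × Fin m12) :
    (fun a b c => S a (f b) (g c)) ∈ TNS (m + 1) m12 (m + 1) 2 n1 n2 := by
  rw [TNS]
  let w : Fin (m + 1) → ℂ := fun i => (i : ℕ)
  have hw : Function.Injective w := fun i j h => Fin.ext (Nat.cast_injective h)
  have hp : (kernelMatrix (linePencil shiftPencil S) (C ∘ w)).det ≠ 0 := fun h =>
    det_kernelMatrix_shiftPencil_ne_zero hw
      (by simpa [h] using (eval_det_kernelMatrix_linePencil shiftPencil S w 0).symm)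
  have h1 := mem_closure_of_eval_ne_zero
    (g := fun t a b c => (shiftPencil a + t • (S a - shiftPencil a) : Matrix _ _ ℂ) (f b) (g c))
    (by fun_prop) hp
    (fun t ht => restrict_mem_tnsSet_of_det_kernelMatrix_ne_zero _
      (eval_det_kernelMatrix_linePencil shiftPencil S w t ▸ ht) hf g) 1
  simp only [one_smul, add_sub_cancel] at h1
  exact h1

end Restriction

end TriangleNetwork

theorem tns_fills_of_large_k1_general (m m12 k1 k2 n1 n2 : ℕ)
    (hk1lo : m12 ≤ k1) (hk1hi : k1 < m * m12)
    (hn1 : n1 + k1 = m * m12) (hn2 : n2 + k2 = m * m12) :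
    TNS m m12 m 2 n1 n2 = Set.univ := by
  obtain ⟨m, rfl⟩ : ∃ m', m = m' + 1 :=
    Nat.exists_eq_add_one.2 (Nat.pos_of_ne_zero (by rintro rfl; simp at hk1hi))
  obtain ⟨e1⟩ : Nonempty (Fin n1 ↪ Fin m × Fin m12) :=
    Function.Embedding.nonempty_of_card_le (by simp only [Fintype.card_fin, Fintype.card_prod]; nlinarith)
  obtain ⟨e2⟩ : Nonempty (Fin n2 ↪ Fin (m + 1) × Fin m12) :=
    Function.Embedding.nonempty_of_card_le (by simp only [Fintype.card_fin, Fintype.card_prod]; omega)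
  let f := e1.trans ((Fin.succEmb m).prodMap (Function.Embedding.refl _))
  refine Set.eq_univ_of_forall fun T => ?_
  let S : Fin 2 → Matrix (Fin (m + 1) × Fin m12) (Fin (m + 1) × Fin m12) ℂ :=
    fun a => Function.extend f (fun b => Function.extend e2 (T a b) 0) 0
  convert TriangleNetwork.restrict_mem_TNS S (f := f) (fun b => Fin.succ_ne_zero _) e2
  simp [S, f.injective.extend_apply, e2.injective.extend_apply]

/-- If the nontriviality condition fails because `m12 ≤ k1`, the triangle tensor
network variety with a physical dimension 2 fills the ambient space. -/
theorem tns_fills_of_large_k1 (m m12 k1 k2 n1 n2 : ℕ)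
    (hm : 2 ≤ m) (hm12 : 1 ≤ m12)
    (hk21 : k2 ≤ k1) (hk1lo : m12 ≤ k1) (hk1hi : k1 < m * m12)
    (hn1 : n1 + k1 = m * m12) (hn2 : n2 + k2 = m * m12) :
    TNS m m12 m 2 n1 n2 = Set.univ :=
  tns_fills_of_large_k1_general m m12 k1 k2 n1 n2 hk1lo hk1hi hn1 hn2
end
end

section
/- Let m12 ≥ 1 and let k1, k2 be integers with 0 ≤ k2 ≤ k1 < m12; set n1 = 2·m12 − k1 and n2 = 2·m12 − k2. Then TNS(2,m12,2; 2,n1,n2) equals the Euclidean closure of the set of tensors T : Fin 2 → Fin n1 → Fin n2 → ℂ for which there exist linearly independent vectors α = (α0,α1) and β = (β0,β1) in ℂ² with rank(α0 • T 0 + α1 • T 1) ≤ m12 and rank(β0 • T 0 + β1 • T 1) ≤ m12 (i.e. the projective line of matrices spanned by the two slices of T meets the determinantal variety of matrices of rank at most m12 in at least two distinct points). -/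
open scoped BigOperators

noncomputable section

/-!
If `T` comes from cores `X0, X1, X2`, the combination `γ₀ T₀ + γ₁ T₁` of its slices is the
network contraction with the single `2 × 2` bond matrix `Y γ = γ₀ X0₀ + γ₁ X0₁` in place of `X0`,
and factoring `Y γ` through `ℂ ^ rank (Y γ)` shows that its rank is at most `m12 · rank (Y γ)`.
Now `det (Y γ)` is a binary quadratic form in `γ`; where its discriminant, a polynomial in `X0`,
does not vanish, it has two independent zeros, giving two slice combinations of rank `≤ m12`.
That discriminant is not identically zero, so such `X0` are dense, and every network tensor is a
limit of tensors with two independent slice combinations of rank `≤ m12`.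

Conversely, if the combinations `M_α, M_β` for independent `α, β` have rank `≤ m12`, factor
each through `ℂ ^ m12` and recover `T` from them with the inverse of the matrix with rows
`α, β`: this is a network whose first core is diagonal in the bond indices.
-/

open Topology Filter

theorem Matrix.exists_eq_mul_of_rank_le {m n K : Type*} [Fintype n] [Field K]
    {M : Matrix m n K} {r : ℕ} (h : M.rank ≤ r) :
    ∃ (A : Matrix m (Fin r) K) (B : Matrix (Fin r) n K), M = A * B := by
  set W := Submodule.span K (Set.range M.col)
  have hW : Module.finrank K W ≤ r := M.rank_eq_finrank_span_cols ▸ h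
  have : Module.Finite K W := FiniteDimensional.span_of_finite K (Set.finite_range _)
  let b := Module.finBasis K W
  -- the basis `b`, padded with zeros to length `r`
  let v : Fin r → m → K := Function.extend (Fin.castLE hW) (fun i => (b i : m → K)) 0
  have hspan : W ≤ Submodule.span K (Set.range v) := by
    intro x hx
    have hx' := congrArg Subtype.val (b.sum_repr ⟨x, hx⟩)
    simp only [AddSubmonoidClass.coe_finsetSum, SetLike.val_smul] at hx'
    rw [← hx']
    refine Submodule.sum_mem _ fun i _ => Submodule.smul_mem _ _ <|
      Submodule.subset_span ⟨Fin.castLE hW i, (Fin.castLE_injective hW).extend_apply _ _ i⟩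
  have hcol (c : n) : ∃ coef : Fin r → K, ∑ j, coef j • v j = M.col c :=
    (Submodule.mem_span_range_iff_exists_fun K).mp (hspan (Submodule.subset_span ⟨c, rfl⟩))
  choose coef hcoef using hcol
  refine ⟨Matrix.of fun i j => v j i, Matrix.of fun j c => coef c j, ?_⟩
  ext i c
  simpa [Matrix.mul_apply, mul_comm] using (congrFun (hcoef c) i).symm

theorem Matrix.rank_lt_card_of_det_eq_zero {n K : Type*} [Fintype n] [DecidableEq n] [Field K]
    {M : Matrix n n K} (h : M.det = 0) : M.rank < Fintype.card n := by
  refine (M.rank_le_card_height).lt_of_ne fun hcard => ?_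
  have htop : LinearMap.range M.mulVecLin = ⊤ :=
    Submodule.eq_top_of_finrank_eq (by rw [Module.finrank_fintype_fun_eq_card]; exact hcard)
  have hunit : IsUnit M := Matrix.mulVec_surjective_iff_isUnit.mp (LinearMap.range_eq_top.mp htop)
  exact (M.isUnit_iff_isUnit_det.mp hunit).ne_zero h

theorem linearIndependent_pair_of_det_ne_zero {K : Type*} [Field K] {α β : Fin 2 → K}
    (h : α 0 * β 1 - α 1 * β 0 ≠ 0) : LinearIndependent K ![α, β] :=
  Matrix.linearIndependent_rows_iff_isUnit (A := Matrix.of ![α, β]).mpr <| by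
    rw [Matrix.isUnit_iff_isUnit_det, Matrix.det_fin_two, isUnit_iff_ne_zero]
    simpa using h

theorem exists_linearIndependent_zeros_of_discrim_ne_zero {K : Type*} [Field K] [IsAlgClosed K]
    [NeZero (2 : K)] {a b c : K} (h : discrim a b c ≠ 0) :
    ∃ α β : Fin 2 → K, LinearIndependent K ![α, β] ∧
      a * α 0 ^ 2 + b * (α 0 * α 1) + c * α 1 ^ 2 = 0 ∧
      a * β 0 ^ 2 + b * (β 0 * β 1) + c * β 1 ^ 2 = 0 := by
  rw [discrim] at h
  by_cases ha : a = 0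
  · have hb : b ≠ 0 := by rintro rfl; simp [ha] at h
    refine ⟨![1, 0], ![c, -b], linearIndependent_pair_of_det_ne_zero ?_, ?_, ?_⟩ <;>
      (simp [ha, hb]; try ring)
  · obtain ⟨s, hs⟩ := IsAlgClosed.exists_pow_nat_eq (b ^ 2 - 4 * a * c) two_pos
    have hs0 : s ≠ 0 := by rintro rfl; simp [← hs] at h
    refine ⟨![-b + s, 2 * a], ![-b - s, 2 * a], linearIndependent_pair_of_det_ne_zero ?_, ?_, ?_⟩
    · simp only [Matrix.cons_val_zero, Matrix.cons_val_one, Matrix.cons_val_fin_one]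
      have : (-b + s) * (2 * a) - 2 * a * (-b - s) = 2 * 2 * a * s := by ring
      simp [this, ha, hs0, two_ne_zero]
    all_goals
      simp only [Matrix.cons_val_zero, Matrix.cons_val_one, Matrix.cons_val_fin_one]
      linear_combination a * hs

/-- The discriminant of the binary quadratic form `(s, t) ↦ det (s • A + t • B)`. -/
def pencilDisc {K : Type*} [Field K] (A B : Matrix (Fin 2) (Fin 2) K) : K :=
  discrim A.det ((A + B).det - A.det - B.det) B.det

theorem Matrix.det_fin_two_smul_add_smul {K : Type*} [Field K] (A B : Matrix (Fin 2) (Fin 2) K)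
    (s t : K) : (s • A + t • B).det =
      A.det * s ^ 2 + ((A + B).det - A.det - B.det) * (s * t) + B.det * t ^ 2 := by
  simp only [Matrix.det_fin_two, Matrix.add_apply, Matrix.smul_apply, smul_eq_mul]
  ring

theorem exists_linearIndependent_det_eq_zero_of_pencilDisc_ne_zero {K : Type*} [Field K]
    [IsAlgClosed K] [NeZero (2 : K)] {A B : Matrix (Fin 2) (Fin 2) K} (h : pencilDisc A B ≠ 0) :
    ∃ α β : Fin 2 → K, LinearIndependent K ![α, β] ∧
      (α 0 • A + α 1 • B).det = 0 ∧ (β 0 • A + β 1 • B).det = 0 := by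
  simp only [Matrix.det_fin_two_smul_add_smul]
  exact exists_linearIndependent_zeros_of_discrim_ne_zero h

section TriangleSlice

variable {m01 m12 m02 n1 n2 : ℕ}
  (X1 : Fin n1 → Fin m01 × Fin m12 → ℂ) (X2 : Fin n2 → Fin m12 × Fin m02 → ℂ)

/-- Slice `a` of the network tensor with cores `X0, X1, X2` is
`triangleSlice X1 X2 (Matrix.of fun i k => X0 a (i, k))`. -/
def triangleSlice : Matrix (Fin m01) (Fin m02) ℂ →ₗ[ℂ] Matrix (Fin n1) (Fin n2) ℂ where
  toFun Y := Matrix.of fun b c => ∑ i, ∑ j, ∑ k, Y i k * X1 b (i, j) * X2 c (j, k)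
  map_add' Y Y' := by
    ext b c
    simp only [Matrix.add_apply, Matrix.of_apply, add_mul, Finset.sum_add_distrib]
  map_smul' t Y := by
    ext b c
    simp only [Matrix.smul_apply, Matrix.of_apply, smul_eq_mul, Finset.mul_sum, mul_assoc,
      RingHom.id_apply]

theorem triangleSlice_mul {ι : Type*} [Fintype ι] (A : Matrix (Fin m01) ι ℂ)
    (B : Matrix ι (Fin m02) ℂ) :
    triangleSlice X1 X2 (A * B) =
      (Matrix.of fun b p => ∑ i, A i p.1 * X1 b (i, p.2) : Matrix (Fin n1) (ι × Fin m12) ℂ) *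
        (Matrix.of fun p c => ∑ k, B p.1 k * X2 c (p.2, k) : Matrix (ι × Fin m12) (Fin n2) ℂ) := by
  refine Matrix.ext fun b c => ?_
  rw [Matrix.mul_apply]
  simp only [triangleSlice, LinearMap.coe_mk, AddHom.coe_mk, Matrix.of_apply, Matrix.mul_apply,
    Finset.sum_mul, Finset.mul_sum, Fintype.sum_prod_type]
  conv_lhs => enter [2, i, 2, j]; rw [Finset.sum_comm]
  conv_lhs => enter [2, i]; rw [Finset.sum_comm]
  rw [Finset.sum_comm]
  refine Finset.sum_congr rfl fun l _ => ?_
  rw [Finset.sum_comm]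
  refine Finset.sum_congr rfl fun j _ => ?_
  rw [Finset.sum_comm]
  exact Finset.sum_congr rfl fun k _ => Finset.sum_congr rfl fun i _ => by ring

theorem rank_triangleSlice_le (Y : Matrix (Fin m01) (Fin m02) ℂ) :
    (triangleSlice X1 X2 Y).rank ≤ Y.rank * m12 := by
  obtain ⟨A, B, hY⟩ := Matrix.exists_eq_mul_of_rank_le (le_refl Y.rank)
  have hfactor := triangleSlice_mul X1 X2 A B
  rw [← hY] at hfactor
  rw [hfactor]
  refine (Matrix.rank_mul_le_left _ _).trans ((Matrix.rank_le_card_width _).trans ?_)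
  simp

theorem rank_triangleSlice_le_of_det_eq_zero (X2 : Fin n2 → Fin m12 × Fin m01 → ℂ)
    {Y : Matrix (Fin m01) (Fin m01) ℂ} (hY : Y.det = 0) :
    (triangleSlice X1 X2 Y).rank ≤ (m01 - 1) * m12 := by
  have hrank : Y.rank ≤ m01 - 1 := by
    have := Matrix.rank_lt_card_of_det_eq_zero hY
    rw [Fintype.card_fin] at this
    omega
  exact (rank_triangleSlice_le X1 X2 Y).trans (Nat.mul_le_mul_right m12 hrank)

end TriangleSlice

def twoRankDrops (r n1 n2 : ℕ) : Set (Fin 2 → Fin n1 → Fin n2 → ℂ) :=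
  {T | ∃ α β : Fin 2 → ℂ, LinearIndependent ℂ ![α, β] ∧
    (α 0 • Matrix.of (T 0) + α 1 • Matrix.of (T 1)).rank ≤ r ∧
    (β 0 • Matrix.of (T 0) + β 1 • Matrix.of (T 1)).rank ≤ r}

theorem mem_twoRankDrops_of_pencilDisc_ne_zero {m12 n1 n2 : ℕ} {T : Fin 2 → Fin n1 → Fin n2 → ℂ}
    {X0 : Fin 2 → Fin 2 × Fin 2 → ℂ} {X1 : Fin n1 → Fin 2 × Fin m12 → ℂ}
    {X2 : Fin n2 → Fin m12 × Fin 2 → ℂ}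
    (hT : ∀ a, Matrix.of (T a) = triangleSlice X1 X2 (Matrix.of fun i k => X0 a (i, k)))
    (hdisc : pencilDisc (Matrix.of fun i k => X0 0 (i, k)) (Matrix.of fun i k => X0 1 (i, k)) ≠ 0) :
    T ∈ twoRankDrops m12 n1 n2 := by
  have hpencil (γ : Fin 2 → ℂ) (hγ : (γ 0 • Matrix.of (fun i k => X0 0 (i, k)) +
      γ 1 • Matrix.of fun i k => X0 1 (i, k)).det = 0) :
      (γ 0 • Matrix.of (T 0) + γ 1 • Matrix.of (T 1)).rank ≤ m12 := by
    rw [hT, hT, ← (triangleSlice X1 X2).map_smul, ← (triangleSlice X1 X2).map_smul, ← map_add]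
    simpa using rank_triangleSlice_le_of_det_eq_zero X1 X2 hγ
  obtain ⟨α, β, hαβ, hα, hβ⟩ := exists_linearIndependent_det_eq_zero_of_pencilDisc_ne_zero hdisc
  exact ⟨α, β, hαβ, hpencil α hα, hpencil β hβ⟩

theorem mem_closure_setOf_ne_zero_of_differentiable_line {E : Type*} [AddCommGroup E] [Module ℂ E]
    [TopologicalSpace E] [ContinuousAdd E] [ContinuousSMul ℂ E] {f : E → ℂ} {x y : E}
    (hf : Differentiable ℂ fun t : ℂ => f (x + t • (y - x))) (hy : f y ≠ 0) :
    x ∈ closure {z | f z ≠ 0} := by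
  have hline : Tendsto (fun t : ℂ => x + t • (y - x)) (𝓝[≠] 0) (𝓝 x) := by
    have : Continuous fun t : ℂ => x + t • (y - x) := by fun_prop
    simpa using (this.tendsto 0).mono_left nhdsWithin_le_nhds
  refine mem_closure_of_tendsto hline ?_
  rcases (hf.analyticAt 0).eventually_eq_zero_or_eventually_ne_zero with hzero | hne
  · have := AnalyticOnNhd.eqOn_zero_of_preconnected_of_eventuallyEq_zero
      (fun z _ => hf.analyticAt z) isPreconnected_univ (Set.mem_univ 0) hzero (Set.mem_univ 1)
    simp at this
    exact absurd this hy
  · exact hne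

theorem mem_tnsSet_of_eq_sum_smul {m01 m12 n0 n1 n2 : ℕ} {T : Fin n0 → Fin n1 → Fin n2 → ℂ}
    (C : Matrix (Fin n0) (Fin m01) ℂ) (M : Fin m01 → Matrix (Fin n1) (Fin n2) ℂ)
    (hM : ∀ i, (M i).rank ≤ m12) (hT : ∀ a, Matrix.of (T a) = ∑ i, C a i • M i) :
    T ∈ tnsSet m01 m12 m01 n0 n1 n2 := by
  choose A B hAB using fun i => Matrix.exists_eq_mul_of_rank_le (hM i)
  refine ⟨fun a p => if p.1 = p.2 then C a p.1 else 0, fun b p => A p.1 b p.2,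
    fun c p => B p.2 p.1 c, fun a b c => ?_⟩
  have := congrFun (congrFun (hT a) b) c
  simp only [Matrix.of_apply, Matrix.sum_apply, Matrix.smul_apply, hAB, Matrix.mul_apply] at this
  simp [this, ite_mul, Finset.mul_sum, mul_assoc]

theorem twoRankDrops_subset_tnsSet (m12 n1 n2 : ℕ) :
    twoRankDrops m12 n1 n2 ⊆ tnsSet 2 m12 2 2 n1 n2 := by
  rintro T ⟨α, β, hαβ, hα, hβ⟩
  set G := Matrix.of ![α, β]
  have hG : G⁻¹ * G = 1 := Matrix.nonsing_inv_mul G <|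
    (Matrix.isUnit_iff_isUnit_det G).mp (Matrix.linearIndependent_rows_iff_isUnit.mp hαβ)
  refine mem_tnsSet_of_eq_sum_smul G⁻¹ (fun i => ∑ l, G i l • Matrix.of (T l)) ?_ fun a => ?_
  · intro i
    fin_cases i <;> simpa [G, Fin.sum_univ_two]
  · simp only [Finset.smul_sum, smul_smul]
    rw [Finset.sum_comm]
    simp only [← Finset.sum_smul, ← Matrix.mul_apply, hG, Matrix.one_apply, ite_smul, one_smul,
      zero_smul, Finset.sum_ite_eq, Finset.mem_univ, if_true]

theorem tnsSet_subset_closure_twoRankDrops (m12 n1 n2 : ℕ) :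
    tnsSet 2 m12 2 2 n1 n2 ⊆ closure (twoRankDrops m12 n1 n2) := by
  rintro T ⟨X0, X1, X2, hT⟩
  let contract (X : Fin 2 → Fin 2 × Fin 2 → ℂ) : Fin 2 → Fin n1 → Fin n2 → ℂ :=
    fun a b c => ∑ i, ∑ j, ∑ k, X a (i, k) * X1 b (i, j) * X2 c (j, k)
  let disc (X : Fin 2 → Fin 2 × Fin 2 → ℂ) : ℂ :=
    pencilDisc (Matrix.of fun i k => X 0 (i, k)) (Matrix.of fun i k => X 1 (i, k))
  have hcontract : Continuous contract := by
    unfold contract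
    fun_prop
  -- slices `diag(1, 0)` and `diag(0, 1)`, whose pencil has discriminant `1`
  let D : Fin 2 → Fin 2 × Fin 2 → ℂ := fun a p => if p = (a, a) then 1 else 0
  have hX0 : X0 ∈ closure {X | disc X ≠ 0} :=
    mem_closure_setOf_ne_zero_of_differentiable_line (y := D)
      (by
        simp only [disc, pencilDisc, discrim, Matrix.det_fin_two, Matrix.add_apply, Matrix.of_apply,
          Pi.add_apply, Pi.smul_apply, Pi.sub_apply, smul_eq_mul]
        fun_prop)
      (by simp [disc, D, pencilDisc, discrim, Matrix.det_fin_two])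
  have hgood : Set.MapsTo contract {X | disc X ≠ 0} (twoRankDrops m12 n1 n2) := fun X hX =>
    mem_twoRankDrops_of_pencilDisc_ne_zero (fun a => rfl) hX
  have hT' : contract X0 = T := by funext a b c; exact (hT a b c).symm
  exact hT' ▸ map_mem_closure hcontract hX0 hgood

theorem tns_two_rank_drops_general (m12 n1 n2 : ℕ) :
    TNS 2 m12 2 2 n1 n2 =
      closure {T : Fin 2 → Fin n1 → Fin n2 → ℂ |
        ∃ α β : Fin 2 → ℂ,
          LinearIndependent ℂ ![α, β] ∧
          (α 0 • Matrix.of (T 0) + α 1 • Matrix.of (T 1)).rank ≤ m12 ∧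
          (β 0 • Matrix.of (T 0) + β 1 • Matrix.of (T 1)).rank ≤ m12} :=
  (closure_minimal (tnsSet_subset_closure_twoRankDrops m12 n1 n2) isClosed_closure).antisymm
    (closure_mono (twoRankDrops_subset_tnsSet m12 n1 n2))

/-- Geometric characterization of the triangle tensor network variety with bond
dimensions `(2,m12,2)`: it is the closure of the set of pencils whose projective line
of matrices meets the rank-≤-m12 determinantal variety in at least two distinct points. -/
theorem tns_two_rank_drops (m12 k1 k2 n1 n2 : ℕ) (hm12 : 1 ≤ m12)
    (hk21 : k2 ≤ k1) (hk1 : k1 < m12)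
    (hn1 : n1 + k1 = 2 * m12) (hn2 : n2 + k2 = 2 * m12) :
    TNS 2 m12 2 2 n1 n2 =
      closure {T : Fin 2 → Fin n1 → Fin n2 → ℂ |
        ∃ α β : Fin 2 → ℂ,
          LinearIndependent ℂ ![α, β] ∧
          (α 0 • Matrix.of (T 0) + α 1 • Matrix.of (T 1)).rank ≤ m12 ∧
          (β 0 • Matrix.of (T 0) + β 1 • Matrix.of (T 1)).rank ≤ m12} :=
  tns_two_rank_drops_general m12 n1 n2
end
end

section
/- Let W and V1', V1'', V2', V2'', V3', V3'' be finite-dimensional complex vector spaces, and for i = 1, 2, 3 set V_i = V_i' × V_i'' (the direct sum, with canonical inclusions ι_i' : V_i' → V_i and ι_i'' : V_i'' → V_i). Let T1 ∈ W ⊗ V1' ⊗ V2' ⊗ V3' and T2 ∈ W ⊗ V1'' ⊗ V2'' ⊗ V3'' (tensor products over ℂ), and set T = (id_W ⊗ ι1' ⊗ ι2' ⊗ ι3')(T1) + (id_W ⊗ ι1'' ⊗ ι2'' ⊗ ι3'')(T2) ∈ W ⊗ V1 ⊗ V2 ⊗ V3. For Y ∈ End(W) and X_i ∈ End(V_i),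 define the derivation operator D = Y⊗id⊗id⊗id + id⊗X1⊗id⊗id + id⊗id⊗X2⊗id + id⊗id⊗id⊗X3 on W ⊗ V1 ⊗ V2 ⊗ V3 (each summand induced via TensorProduct.map). If D T = 0, then D((id_W ⊗ ι1' ⊗ ι2' ⊗ ι3')(T1)) = 0 and D((id_W ⊗ ι1'' ⊗ ι2'' ⊗ ι3'')(T2)) = 0. -/
open scoped TensorProduct

noncomputable section

/-- The derivation operator `Y⊗id⊗id⊗id + id⊗X1⊗id⊗id + id⊗id⊗X2⊗id + id⊗id⊗id⊗X3`
on a fourfold tensor product. -/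
def deriv4 {W A B C : Type*}
    [AddCommGroup W] [Module ℂ W] [AddCommGroup A] [Module ℂ A]
    [AddCommGroup B] [Module ℂ B] [AddCommGroup C] [Module ℂ C]
    (Y : W →ₗ[ℂ] W) (X1 : A →ₗ[ℂ] A) (X2 : B →ₗ[ℂ] B) (X3 : C →ₗ[ℂ] C) :
    (W ⊗[ℂ] (A ⊗[ℂ] (B ⊗[ℂ] C))) →ₗ[ℂ] (W ⊗[ℂ] (A ⊗[ℂ] (B ⊗[ℂ] C))) :=
  TensorProduct.map Y LinearMap.id
    + TensorProduct.map LinearMap.id (TensorProduct.map X1 LinearMap.id)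
    + TensorProduct.map LinearMap.id
        (TensorProduct.map LinearMap.id (TensorProduct.map X2 LinearMap.id))
    + TensorProduct.map LinearMap.id
        (TensorProduct.map LinearMap.id (TensorProduct.map LinearMap.id X3))

/-- The map `id_W ⊗ f ⊗ g ⊗ h` on a fourfold tensor product. -/
def incl4 {W A' A B' B C' C : Type*}
    [AddCommGroup W] [Module ℂ W]
    [AddCommGroup A'] [Module ℂ A'] [AddCommGroup A] [Module ℂ A]
    [AddCommGroup B'] [Module ℂ B'] [AddCommGroup B] [Module ℂ B]
    [AddCommGroup C'] [Module ℂ C'] [AddCommGroup C] [Module ℂ C]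
    (f : A' →ₗ[ℂ] A) (g : B' →ₗ[ℂ] B) (h : C' →ₗ[ℂ] C) :
    (W ⊗[ℂ] (A' ⊗[ℂ] (B' ⊗[ℂ] C'))) →ₗ[ℂ] (W ⊗[ℂ] (A ⊗[ℂ] (B ⊗[ℂ] C))) :=
  TensorProduct.map LinearMap.id (TensorProduct.map f (TensorProduct.map g h))

set_option maxHeartbeats 2000000 in
/-- If a derivation annihilates a direct sum of tensors supported on complementary
triples of subspaces of the last three factors, it annihilates each summand. -/
theorem ann_direct_sum_three_factors
    (W V1' V1'' V2' V2'' V3' V3'' : Type*)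
    [AddCommGroup W] [Module ℂ W] [FiniteDimensional ℂ W]
    [AddCommGroup V1'] [Module ℂ V1'] [FiniteDimensional ℂ V1']
    [AddCommGroup V1''] [Module ℂ V1''] [FiniteDimensional ℂ V1'']
    [AddCommGroup V2'] [Module ℂ V2'] [FiniteDimensional ℂ V2']
    [AddCommGroup V2''] [Module ℂ V2''] [FiniteDimensional ℂ V2'']
    [AddCommGroup V3'] [Module ℂ V3'] [FiniteDimensional ℂ V3']
    [AddCommGroup V3''] [Module ℂ V3''] [FiniteDimensional ℂ V3'']
    (T1 : W ⊗[ℂ] (V1' ⊗[ℂ] (V2' ⊗[ℂ] V3')))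
    (T2 : W ⊗[ℂ] (V1'' ⊗[ℂ] (V2'' ⊗[ℂ] V3'')))
    (Y : W →ₗ[ℂ] W)
    (X1 : (V1' × V1'') →ₗ[ℂ] (V1' × V1''))
    (X2 : (V2' × V2'') →ₗ[ℂ] (V2' × V2''))
    (X3 : (V3' × V3'') →ₗ[ℂ] (V3' × V3''))
    (hD : deriv4 Y X1 X2 X3
        (incl4 (LinearMap.inl ℂ V1' V1'') (LinearMap.inl ℂ V2' V2'')
            (LinearMap.inl ℂ V3' V3'') T1
          + incl4 (LinearMap.inr ℂ V1' V1'') (LinearMap.inr ℂ V2' V2'')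
            (LinearMap.inr ℂ V3' V3'') T2) = 0) :
    deriv4 Y X1 X2 X3
        (incl4 (LinearMap.inl ℂ V1' V1'') (LinearMap.inl ℂ V2' V2'')
          (LinearMap.inl ℂ V3' V3'') T1) = 0 ∧
    deriv4 Y X1 X2 X3
        (incl4 (LinearMap.inr ℂ V1' V1'') (LinearMap.inr ℂ V2' V2'')
          (LinearMap.inr ℂ V3' V3'') T2) = 0 := by
  classical
  set e1' := (LinearMap.inl ℂ V1' V1'').comp (LinearMap.fst ℂ V1' V1'') with he1'
  set e1'' := (LinearMap.inr ℂ V1' V1'').comp (LinearMap.snd ℂ V1' V1'') with he1''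
  set e2' := (LinearMap.inl ℂ V2' V2'').comp (LinearMap.fst ℂ V2' V2'') with he2'
  set e2'' := (LinearMap.inr ℂ V2' V2'').comp (LinearMap.snd ℂ V2' V2'') with he2''
  set e3' := (LinearMap.inl ℂ V3' V3'').comp (LinearMap.fst ℂ V3' V3'') with he3'
  set e3'' := (LinearMap.inr ℂ V3' V3'').comp (LinearMap.snd ℂ V3' V3'') with he3''
  set P : (W ⊗[ℂ] ((V1' × V1'') ⊗[ℂ] ((V2' × V2'') ⊗[ℂ] (V3' × V3'')))) →ₗ[ℂ]
      (W ⊗[ℂ] ((V1' × V1'') ⊗[ℂ] ((V2' × V2'') ⊗[ℂ] (V3' × V3'')))) :=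
    TensorProduct.map LinearMap.id
      (TensorProduct.map e1' (TensorProduct.map e2' e3')
        + TensorProduct.map e1'' (TensorProduct.map e2' e3')
        + TensorProduct.map e1' (TensorProduct.map e2'' e3')
        + TensorProduct.map e1' (TensorProduct.map e2' e3'')) with hP
  have hL : P ∘ₗ (deriv4 Y X1 X2 X3) ∘ₗ
      (incl4 (LinearMap.inl ℂ V1' V1'') (LinearMap.inl ℂ V2' V2'')
        (LinearMap.inl ℂ V3' V3'')) =
      (deriv4 Y X1 X2 X3) ∘ₗ
      (incl4 (LinearMap.inl ℂ V1' V1'') (LinearMap.inl ℂ V2' V2'')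
        (LinearMap.inl ℂ V3' V3'')) := by
    ext w a b c
    simp only [hP, he1', he1'', he2', he2'', he3', he3'', deriv4, incl4,
      TensorProduct.AlgebraTensorModule.curry_apply, TensorProduct.curry_apply,
      LinearMap.coe_comp, LinearMap.coe_restrictScalars, Function.comp_apply,
      TensorProduct.map_tmul, LinearMap.add_apply, LinearMap.id_coe, id_eq,
      LinearMap.inl_apply, LinearMap.inr_apply, LinearMap.fst_apply, LinearMap.snd_apply,
      TensorProduct.tmul_add, TensorProduct.add_tmul, map_add]
    have hx1 : ((X1 (a,0)).1, (0:V1'')) + ((0:V1'), (X1 (a,0)).2) = X1 (a,0) := by simp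
    have hx2 : ((X2 (b,0)).1, (0:V2'')) + ((0:V2'), (X2 (b,0)).2) = X2 (b,0) := by simp
    have hx3 : ((X3 (c,0)).1, (0:V3'')) + ((0:V3'), (X3 (c,0)).2) = X3 (c,0) := by simp
    rw [← hx1, ← hx2, ← hx3]
    simp only [TensorProduct.tmul_add, TensorProduct.add_tmul, Prod.fst_add, Prod.snd_add,
      Prod.fst, Prod.snd, add_zero, zero_add, Prod.mk_zero_zero,
      TensorProduct.tmul_zero, TensorProduct.zero_tmul]
  have hR : P ∘ₗ (deriv4 Y X1 X2 X3) ∘ₗ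
      (incl4 (LinearMap.inr ℂ V1' V1'') (LinearMap.inr ℂ V2' V2'')
        (LinearMap.inr ℂ V3' V3'')) = 0 := by
    ext w a b c
    simp only [hP, he1', he1'', he2', he2'', he3', he3'', deriv4, incl4,
      TensorProduct.AlgebraTensorModule.curry_apply, TensorProduct.curry_apply,
      LinearMap.coe_comp, LinearMap.coe_restrictScalars, Function.comp_apply,
      TensorProduct.map_tmul, LinearMap.add_apply, LinearMap.id_coe, id_eq,
      LinearMap.inl_apply, LinearMap.inr_apply, LinearMap.fst_apply, LinearMap.snd_apply,
      TensorProduct.tmul_add, TensorProduct.add_tmul, Prod.mk_zero_zero,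
      TensorProduct.tmul_zero, TensorProduct.zero_tmul, add_zero, zero_add,
      LinearMap.zero_apply, map_add]
  have h1 : deriv4 Y X1 X2 X3
      (incl4 (LinearMap.inl ℂ V1' V1'') (LinearMap.inl ℂ V2' V2'')
        (LinearMap.inl ℂ V3' V3'') T1) = 0 := by
    have := congrArg P hD
    rw [map_add, map_zero] at this
    have hLt := LinearMap.congr_fun hL T1
    have hRt := LinearMap.congr_fun hR T2
    simp only [LinearMap.comp_apply, LinearMap.zero_apply] at hLt hRt
    rw [map_add] at this
    calc deriv4 Y X1 X2 X3 (incl4 (LinearMap.inl ℂ V1' V1'') (LinearMap.inl ℂ V2' V2'')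
          (LinearMap.inl ℂ V3' V3'') T1)
        = P (deriv4 Y X1 X2 X3 (incl4 (LinearMap.inl ℂ V1' V1'') (LinearMap.inl ℂ V2' V2'')
          (LinearMap.inl ℂ V3' V3'') T1)) := hLt.symm
      _ = 0 := by rw [hRt, add_zero] at this; exact this
  refine ⟨h1, ?_⟩
  have := hD
  rw [map_add, h1, zero_add] at this
  exact this
end
end
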